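/- Closed-loop 𝓗∞ energy identity: let A, B, B_w, Q, R, γ be as in the game Riccati setup with R positive definite and γ > 0, let P* be a symmetric n×n matrix with 𝓡(P*) = 0, and set K* = −R⁻¹BᵀP*, L* = γ⁻²B_wᵀP*, Q* = Q + (K*)ᵀRK*. Let x : [0,∞) → ℝⁿ be differentiable with x'(t) = (A+BK*) x(t) + B_w w(t) for all t ≥ 0, x(0) = 0, and x(t) → 0 as t → ∞, where w : [0,∞) → ℝ^p is measurable with t ↦ ‖x(t)‖² and t ↦ ‖w(t)‖² integrable on (0,∞). Then ∫₀^∞ ( x(t)ᵀQ*x(t) − γ²‖w(t)‖² ) dt = −γ² ∫₀^∞ ‖w(t) − L*x(t)‖² dt. -/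

import Mathlib

/-!
Along a trajectory, the storage function `V t = x tᵀ P* x t` satisfies
`V' = -(xᵀ Q* x - γ² ‖w‖²) - γ² ‖w - L* x‖²`: the Riccati equation turns into the Lyapunov
equation `(A + B K*)ᵀ P* + P* (A + B K*) = -(Q* + γ² L*ᵀ L*)` for the closed loop, and
`B_wᵀ P* = γ² L*` lets the cross term complete the square. Integrating over `(0, ∞)` with
`V 0 = 0` and `V t → 0` gives the identity; all integrands are products of `L²` coordinates.
-/

open Matrix MeasureTheory Filter

section Algebra

variable {𝕜 ι κ ν : Type*} [Fintype ι] [Fintype κ] [Fintype ν]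

theorem closedLoop_lyapunov_of_riccati [Field 𝕜] [DecidableEq κ]
    {A Q P : Matrix ι ι 𝕜} {B : Matrix ι κ 𝕜} {Bw : Matrix ι ν 𝕜} {R : Matrix κ κ 𝕜} {γ : 𝕜}
    (hR : IsUnit R.det) (hRsymm : R.IsSymm) (hP : P.IsSymm) (hγ : γ ≠ 0)
    (hARE : Aᵀ * P + P * A + Q - P * B * R⁻¹ * Bᵀ * P + (γ ^ 2)⁻¹ • (P * Bw * Bwᵀ * P) = 0)
    {K : Matrix κ ι 𝕜} {L : Matrix ν ι 𝕜} (hK : K = -(R⁻¹ * Bᵀ * P))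
    (hL : L = (γ ^ 2)⁻¹ • (Bwᵀ * P)) :
    (A + B * K)ᵀ * P + P * (A + B * K) = -(Q + Kᵀ * R * K + γ ^ 2 • (Lᵀ * L)) := by
  have hKt : Kᵀ = -(P * B * R⁻¹) := by
    simp [hK, transpose_mul, transpose_nonsing_inv, hRsymm.eq, hP.eq, Matrix.mul_assoc]
  have hKRK : Kᵀ * R * K = P * B * R⁻¹ * Bᵀ * P := by
    rw [hKt, hK, Matrix.neg_mul, Matrix.neg_mul, Matrix.mul_neg, neg_neg, Matrix.mul_assoc _ R,
      ← Matrix.mul_assoc R, ← Matrix.mul_assoc R, mul_nonsing_inv R hR, Matrix.one_mul]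
    simp only [Matrix.mul_assoc]
  have hLL : γ ^ 2 • (Lᵀ * L) = (γ ^ 2)⁻¹ • (P * Bw * Bwᵀ * P) := by
    rw [hL, transpose_smul, transpose_mul, hP.eq, transpose_transpose, Matrix.smul_mul,
      Matrix.mul_smul, smul_smul, smul_smul, mul_inv_cancel₀ (pow_ne_zero 2 hγ), one_mul,
      Matrix.mul_assoc (P * Bw)]
  rw [← sub_eq_zero, ← hARE, hKRK, hLL, transpose_add, transpose_mul, hKt, hK]
  simp only [Matrix.mul_add, Matrix.add_mul, Matrix.neg_mul, Matrix.mul_neg, Matrix.mul_assoc]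
  abel

theorem mulVec_dotProduct_mulVec [CommSemiring 𝕜] (M : Matrix ι κ 𝕜) (N : Matrix ι ν 𝕜)
    (x : κ → 𝕜) (y : ν → 𝕜) : (M *ᵥ x) ⬝ᵥ N *ᵥ y = x ⬝ᵥ (Mᵀ * N) *ᵥ y := by
  rw [dotProduct_comm, ← dotProduct_transpose_mulVec, mulVec_mulVec]

theorem dissipation_identity [CommRing 𝕜] {Acl P Qs : Matrix ι ι 𝕜} {Bw : Matrix ι ν 𝕜}
    {L : Matrix ν ι 𝕜} {c : 𝕜} (hP : P.IsSymm)
    (hLyap : Aclᵀ * P + P * Acl = -(Qs + c • (Lᵀ * L))) (hBL : Bwᵀ * P = c • L)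
    (v : ι → 𝕜) (z : ν → 𝕜) :
    (Acl *ᵥ v + Bw *ᵥ z) ⬝ᵥ P *ᵥ v + v ⬝ᵥ P *ᵥ (Acl *ᵥ v + Bw *ᵥ z)
      = -(v ⬝ᵥ Qs *ᵥ v - c * (z ⬝ᵥ z)) - c * ((z - L *ᵥ v) ⬝ᵥ (z - L *ᵥ v)) := by
  have hquad : (Acl *ᵥ v) ⬝ᵥ P *ᵥ v + v ⬝ᵥ P *ᵥ (Acl *ᵥ v)
      = -(v ⬝ᵥ Qs *ᵥ v) - c * ((L *ᵥ v) ⬝ᵥ L *ᵥ v) := by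
    rw [mulVec_dotProduct_mulVec Acl P, mulVec_dotProduct_mulVec L L, mulVec_mulVec,
      ← dotProduct_add, ← add_mulVec, hLyap, neg_mulVec, add_mulVec, smul_mulVec, dotProduct_neg,
      dotProduct_add, dotProduct_smul, smul_eq_mul]
    ring
  have hcross : (Bw *ᵥ z) ⬝ᵥ P *ᵥ v = c * (z ⬝ᵥ L *ᵥ v) := by
    rw [mulVec_dotProduct_mulVec, hBL, smul_mulVec, dotProduct_smul, smul_eq_mul]
  have hcross_symm : v ⬝ᵥ P *ᵥ (Bw *ᵥ z) = (Bw *ᵥ z) ⬝ᵥ P *ᵥ v := by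
    rw [← dotProduct_transpose_mulVec, hP.eq]
  have hsq : (z - L *ᵥ v) ⬝ᵥ (z - L *ᵥ v)
      = z ⬝ᵥ z - 2 * (z ⬝ᵥ L *ᵥ v) + (L *ᵥ v) ⬝ᵥ L *ᵥ v := by
    rw [sub_dotProduct, dotProduct_sub, dotProduct_sub, dotProduct_comm (L *ᵥ v) z]
    ring
  rw [add_dotProduct, mulVec_add, dotProduct_add, hcross_symm, hcross, hsq]
  linear_combination hquad

end Algebra

section Calculus

variable {𝕜 : Type*} [NontriviallyNormedField 𝕜] {ι κ : Type*} [Fintype ι]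
  {f g : 𝕜 → ι → 𝕜} {f' g' : ι → 𝕜} {t : 𝕜}

theorem HasDerivAt.dotProduct (hf : HasDerivAt f f' t) (hg : HasDerivAt g g' t) :
    HasDerivAt (fun s => f s ⬝ᵥ g s) (f' ⬝ᵥ g t + f t ⬝ᵥ g') t := by
  have := HasDerivAt.fun_sum fun i (_ : i ∈ Finset.univ) =>
    (hasDerivAt_pi.1 hf i).fun_mul (hasDerivAt_pi.1 hg i)
  rwa [Finset.sum_add_distrib] at this

theorem HasDerivAt.mulVec (M : Matrix κ ι 𝕜) (hf : HasDerivAt f f' t) :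
    HasDerivAt (fun s => M *ᵥ f s) (M *ᵥ f') t :=
  hasDerivAt_pi.2 fun i => HasDerivAt.fun_sum fun j _ => (hasDerivAt_pi.1 hf j).const_mul (M i j)

end Calculus

section Integrability

variable {α ι κ : Type*} [MeasurableSpace α] {μ : Measure α} [Fintype ι]
  {f g : α → ι → ℝ}

theorem memLp_two_apply_of_integrable_dotProduct_self (hf : AEStronglyMeasurable f μ)
    (hff : Integrable (fun a => f a ⬝ᵥ f a) μ) (i : ι) : MemLp (fun a => f a i) 2 μ := by
  have hfi : AEStronglyMeasurable (fun a => f a i) μ :=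
    (continuous_apply i).comp_aestronglyMeasurable hf
  refine (memLp_two_iff_integrable_sq hfi).2
    (hff.mono' (hfi.pow 2) (Eventually.of_forall fun a => ?_))
  rw [Real.norm_eq_abs, abs_of_nonneg (sq_nonneg _), sq]
  exact Finset.single_le_sum (fun j _ => mul_self_nonneg (f a j)) (Finset.mem_univ i)

theorem integrable_dotProduct_of_memLp_two (hf : ∀ i, MemLp (fun a => f a i) 2 μ)
    (hg : ∀ i, MemLp (fun a => g a i) 2 μ) : Integrable (fun a => f a ⬝ᵥ g a) μ :=
  integrable_finsetSum _ fun i _ => (hf i).integrable_mul (hg i)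

theorem memLp_mulVec_apply {p : ENNReal} (M : Matrix κ ι ℝ)
    (hf : ∀ j, MemLp (fun a => f a j) p μ) (i : κ) : MemLp (fun a => (M *ᵥ f a) i) p μ :=
  memLp_finsetSum _ fun j _ => (hf j).const_mul (M i j)

end Integrability

theorem integral_Ioi_eq_neg_mul_of_hasDerivAt {V f g : ℝ → ℝ} {c : ℝ}
    (hV0 : ContinuousWithinAt V (Set.Ici 0) 0) (hV0' : V 0 = 0)
    (hV : ∀ t > 0, HasDerivAt V (-f t - c * g t) t) (hV_top : Tendsto V atTop (nhds 0))
    (hf : IntegrableOn f (Set.Ioi 0)) (hg : IntegrableOn g (Set.Ioi 0)) :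
    ∫ t in Set.Ioi 0, f t = -c * ∫ t in Set.Ioi 0, g t := by
  have hf' : IntegrableOn (fun t => -f t) (Set.Ioi 0) := hf.neg
  have h := integral_Ioi_of_hasDerivAt_of_tendsto hV0 hV (hf'.sub (hg.const_mul c)) hV_top
  rw [integral_sub hf' (hg.const_mul c), integral_neg, integral_const_mul, hV0'] at h
  linarith


theorem hinf_closed_loop_energy_identity_general {n m p : ℕ}
    (A : Matrix (Fin n) (Fin n) ℝ) (B : Matrix (Fin n) (Fin m) ℝ)
    (Bw : Matrix (Fin n) (Fin p) ℝ)
    (Q : Matrix (Fin n) (Fin n) ℝ)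
    (R : Matrix (Fin m) (Fin m) ℝ) (hR : R.PosDef) (hRsymm : R.IsSymm)
    (γ : ℝ) (hγ : 0 < γ)
    (Ps : Matrix (Fin n) (Fin n) ℝ) (hPs : Ps.IsSymm)
    (hARE : Aᵀ * Ps + Ps * A + Q - Ps * B * R⁻¹ * Bᵀ * Ps
      + (γ ^ 2)⁻¹ • (Ps * Bw * Bwᵀ * Ps) = 0)
    (x : ℝ → Fin n → ℝ) (w : ℝ → Fin p → ℝ)
    (hw : Measurable w)
    (hderiv : ∀ t : ℝ, 0 ≤ t →
      HasDerivAt x ((A + B * (-(R⁻¹ * Bᵀ * Ps))) *ᵥ x t + Bw *ᵥ w t) t)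
    (hx0 : x 0 = 0)
    (hlim : Tendsto x atTop (nhds 0))
    (hint_x : IntegrableOn (fun t => x t ⬝ᵥ x t) (Set.Ioi (0 : ℝ)))
    (hint_w : IntegrableOn (fun t => w t ⬝ᵥ w t) (Set.Ioi (0 : ℝ))) :
    (let Ks := -(R⁻¹ * Bᵀ * Ps)
     let Ls := (γ ^ 2)⁻¹ • (Bwᵀ * Ps)
     let Qs := Q + Ksᵀ * R * Ks
     (∫ t in Set.Ioi (0 : ℝ), (x t ⬝ᵥ Qs *ᵥ x t - γ ^ 2 * (w t ⬝ᵥ w t)))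
       = -(γ ^ 2) *
         ∫ t in Set.Ioi (0 : ℝ), (w t - Ls *ᵥ x t) ⬝ᵥ (w t - Ls *ᵥ x t)) := by
  intro Ks Ls Qs
  have hLyap : (A + B * Ks)ᵀ * Ps + Ps * (A + B * Ks) = -(Qs + γ ^ 2 • (Lsᵀ * Ls)) :=
    closedLoop_lyapunov_of_riccati ((Matrix.isUnit_iff_isUnit_det R).1 hR.isUnit) hRsymm hPs
      hγ.ne' hARE rfl rfl
  have hBL : Bwᵀ * Ps = γ ^ 2 • Ls := by
    rw [smul_smul, mul_inv_cancel₀ (pow_ne_zero 2 hγ.ne'), one_smul]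
  have hx_cont : ContinuousOn x (Set.Ioi 0) := fun t ht =>
    (hderiv t (le_of_lt ht)).continuousAt.continuousWithinAt
  have hxL2 := memLp_two_apply_of_integrable_dotProduct_self
    (hx_cont.aestronglyMeasurable measurableSet_Ioi) hint_x
  have hwL2 := memLp_two_apply_of_integrable_dotProduct_self hw.aestronglyMeasurable hint_w
  have hdefectL2 : ∀ i, MemLp (fun t => (w t - Ls *ᵥ x t) i) 2 (volume.restrict (Set.Ioi 0)) :=
    fun i => (hwL2 i).sub (memLp_mulVec_apply Ls hxL2 i)
  have hV_cont : Continuous fun v : Fin n → ℝ => v ⬝ᵥ Ps *ᵥ v := by fun_prop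
  refine integral_Ioi_eq_neg_mul_of_hasDerivAt (V := fun t => x t ⬝ᵥ Ps *ᵥ x t)
    (hV_cont.continuousAt.comp (hderiv 0 le_rfl).continuousAt).continuousWithinAt
    (by simp [hx0]) (fun t ht => ?_) ((hV_cont.tendsto' 0 0 (by simp)).comp hlim)
    ((integrable_dotProduct_of_memLp_two hxL2 (memLp_mulVec_apply Qs hxL2)).sub
      (hint_w.const_mul _))
    (integrable_dotProduct_of_memLp_two hdefectL2 hdefectL2)
  have hx := hderiv t (le_of_lt ht)
  rw [← dissipation_identity hPs hLyap hBL]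
  exact hx.dotProduct (hx.mulVec Ps)

/-- Closed-loop 𝓗∞ energy identity. -/
theorem hinf_closed_loop_energy_identity {n m p : ℕ}
    (A : Matrix (Fin n) (Fin n) ℝ) (B : Matrix (Fin n) (Fin m) ℝ)
    (Bw : Matrix (Fin n) (Fin p) ℝ)
    (Q : Matrix (Fin n) (Fin n) ℝ) (hQ : Q.IsSymm)
    (R : Matrix (Fin m) (Fin m) ℝ) (hR : R.PosDef) (hRsymm : R.IsSymm)
    (γ : ℝ) (hγ : 0 < γ)
    (Ps : Matrix (Fin n) (Fin n) ℝ) (hPs : Ps.IsSymm)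
    (hARE : Aᵀ * Ps + Ps * A + Q - Ps * B * R⁻¹ * Bᵀ * Ps
      + (γ ^ 2)⁻¹ • (Ps * Bw * Bwᵀ * Ps) = 0)
    (x : ℝ → Fin n → ℝ) (w : ℝ → Fin p → ℝ)
    (hw : Measurable w)
    (hderiv : ∀ t : ℝ, 0 ≤ t →
      HasDerivAt x ((A + B * (-(R⁻¹ * Bᵀ * Ps))) *ᵥ x t + Bw *ᵥ w t) t)
    (hx0 : x 0 = 0)
    (hlim : Tendsto x atTop (nhds 0))
    (hint_x : IntegrableOn (fun t => x t ⬝ᵥ x t) (Set.Ioi (0 : ℝ)))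
    (hint_w : IntegrableOn (fun t => w t ⬝ᵥ w t) (Set.Ioi (0 : ℝ))) :
    (let Ks := -(R⁻¹ * Bᵀ * Ps)
     let Ls := (γ ^ 2)⁻¹ • (Bwᵀ * Ps)
     let Qs := Q + Ksᵀ * R * Ks
     (∫ t in Set.Ioi (0 : ℝ), (x t ⬝ᵥ Qs *ᵥ x t - γ ^ 2 * (w t ⬝ᵥ w t)))
       = -(γ ^ 2) *
         ∫ t in Set.Ioi (0 : ℝ), (w t - Ls *ᵥ x t) ⬝ᵥ (w t - Ls *ᵥ x t)) :=
  hinf_closed_loop_energy_identity_general A B Bw Q R hR hRsymm γ hγ Ps hPs hARE x w hw hderiv hx0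
    hlim hint_x hint_w
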